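/- Let 0 < γ ≤ 1/2 and let (a_n)_{n≥1} be the block-constructed sequence built from strictly increasing sequences (m_j), (e_j) of positive integers satisfying condition (i): (log m_l)² ≥ E_{l−1} for all l ≥ 2, and condition (ii): e_l = ⌈ F_l^{2γ} / log(F_l^{2γ}) ⌉ for all l. Let α be a real number such that the discrepancy of ({n α})_{n≥1} satisfies N·D_N ≤ c̄₁(α)·(log N)^{3/2} for all N ≥ 2, and the discrepancy of ({n² α})_{n≥1} satisfies N·D_N ≤ c̄₂(α)·N^{1/2}·(log N)^{3/8} for all N ≥ 2. Then for all sufficiently large l and all N with F_l < N ≤ E_l, the discrepancy of the first N terms of ({a_n α})_{n≥1} satisfies N·D_N ≤ max(1, c̄₂(α)) · 2^{1+γ} · N^γ. -/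

import Mathlib

/-!
For `F_l < N ≤ E_l` the first `N` terms split into the first `E_{l-1}` terms, the `l`-th linear
block, and the first `K = N - F_l` terms of the `l`-th quadratic block. Both blocks are translates
mod 1 of initial segments of `(n α)` and `(n² α)`, and a translation mod 1 at most doubles the
discrepancy. Condition (i) bounds the first two contributions by `O((log N)²) = o(N^γ)`. Condition
(ii) gives `K ≤ 2 X / log X` with `X = F_l^{2γ}`, so the hypothesis on `(n² α)` bounds the last
contribution by `c̄₂ √X = c̄₂ F_l^γ` once `l` is large.
-/

open Finset MeasureTheory Filter

/-- Discrepancy of the first `N` points `x 1, …, x N` (points in `[0,1)`):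
`D_N = sup_{0 ≤ a < b ≤ 1} | #{1 ≤ n ≤ N : x n ∈ [a,b)} / N − (b − a) |`. -/
noncomputable def disc (N : ℕ) (x : ℕ → ℝ) : ℝ :=
  ⨆ p : {p : ℝ × ℝ // 0 ≤ p.1 ∧ p.1 < p.2 ∧ p.2 ≤ 1},
    |(((Finset.Icc 1 N).filter (fun n => x n ∈ Set.Ico p.1.1 p.1.2)).card : ℝ) / N
      - (p.1.2 - p.1.1)|

/-- Index of the last term of the `s`-th linear block:
`F_s = Σ_{i=1}^s m_i + Σ_{i=1}^{s-1} e_i`. -/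
def Fidx (m e : ℕ → ℕ) (s : ℕ) : ℕ :=
  (∑ i ∈ Finset.Icc 1 s, m i) + ∑ i ∈ Finset.Icc 1 (s - 1), e i

/-- Index of the last term of the `s`-th quadratic block:
`E_s = Σ_{i=1}^s m_i + Σ_{i=1}^s e_i`. -/
def Eidx (m e : ℕ → ℕ) (s : ℕ) : ℕ :=
  (∑ i ∈ Finset.Icc 1 s, m i) + ∑ i ∈ Finset.Icc 1 s, e i

/-- The value `A_j = B_{j-1} + m_j` of the block construction. -/
def Aval (m e : ℕ → ℕ) (j : ℕ) : ℕ :=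
  (∑ i ∈ Finset.Icc 1 j, m i) + ∑ i ∈ Finset.Icc 1 (j - 1), (e i) ^ 2

/-- The value `B_j = A_j + e_j ^ 2` of the block construction. -/
def Bval (m e : ℕ → ℕ) (j : ℕ) : ℕ :=
  (∑ i ∈ Finset.Icc 1 j, m i) + ∑ i ∈ Finset.Icc 1 j, (e i) ^ 2

/-- `a` is the block-constructed sequence built from `m` and `e`: for each `l ≥ 1`,
the terms with indices `E_{l-1} < n ≤ F_l` form the `l`-th linear block
`B_{l-1}+1, …, B_{l-1}+m_l = A_l`, and the terms with indices `F_l < n ≤ E_l`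
form the `l`-th quadratic block `A_l+1², …, A_l+e_l² = B_l`. -/
def IsBlockSeq (m e a : ℕ → ℕ) : Prop :=
  ∀ l : ℕ, 1 ≤ l →
    (∀ n : ℕ, Eidx m e (l - 1) < n → n ≤ Fidx m e l →
      a n = Bval m e (l - 1) + (n - Eidx m e (l - 1))) ∧
    (∀ n : ℕ, Fidx m e l < n → n ≤ Eidx m e l →
      a n = Aval m e l + (n - Fidx m e l) ^ 2)

open Real

section Deviation

variable (x : ℕ → ℝ)

noncomputable def blockDeviation (s M : ℕ) (u v : ℝ) : ℝ :=
  (#{n ∈ Ioc s (s + M) | x n ∈ Set.Ico u v} : ℝ) - M * (v - u)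

lemma blockDeviation_add (s M M' : ℕ) (u v : ℝ) :
    blockDeviation x s (M + M') u v =
      blockDeviation x s M u v + blockDeviation x (s + M) M' u v := by
  rw [blockDeviation, ← add_assoc, ← Ioc_union_Ioc_eq_Ioc (by omega : s ≤ s + M) (by omega),
    filter_union, card_union_of_disjoint (disjoint_filter_filter (Ioc_disjoint_Ioc_of_le le_rfl))]
  simp only [blockDeviation]
  push_cast
  ring

lemma blockDeviation_eq_shift (s M : ℕ) (u v : ℝ) :
    blockDeviation x s M u v = blockDeviation (fun k => x (s + k)) 0 M u v := by
  rw [blockDeviation, blockDeviation, zero_add]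
  nth_rewrite 1 [← add_zero s]
  rw [← map_add_left_Ioc, filter_map, card_map]
  rfl

lemma abs_blockDeviation_le (s M : ℕ) {u v : ℝ} (hu : 0 ≤ u) (huv : u ≤ v) (hv : v ≤ 1) :
    |blockDeviation x s M u v| ≤ M := by
  have hcard : (#{n ∈ Ioc s (s + M) | x n ∈ Set.Ico u v} : ℝ) ≤ M := by
    exact_mod_cast (card_filter_le _ _).trans (by simp)
  have hM : (0 : ℝ) ≤ M := M.cast_nonneg
  rw [blockDeviation, abs_le]
  constructor <;> nlinarith [(#{n ∈ Ioc s (s + M) | x n ∈ Set.Ico u v}).cast_nonneg (α := ℝ)]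

lemma mul_abs_card_div_sub (N : ℕ) (u v : ℝ) :
    N * |(#{n ∈ Icc 1 N | x n ∈ Set.Ico u v} : ℝ) / N - (v - u)| =
      |blockDeviation x 0 N u v| := by
  rcases N.eq_zero_or_pos with rfl | hN
  · simp [blockDeviation]
  · have hN' : (0 : ℝ) < N := by exact_mod_cast hN
    rw [← abs_of_pos hN', ← abs_mul, abs_of_pos hN', blockDeviation, zero_add,
      ← Icc_add_one_left_eq_Ioc, zero_add]
    congr 1
    field_simp

instance : Nonempty {p : ℝ × ℝ // 0 ≤ p.1 ∧ p.1 < p.2 ∧ p.2 ≤ 1} :=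
  ⟨⟨(0, 1), le_rfl, zero_lt_one, le_rfl⟩⟩

lemma bddAbove_disc (N : ℕ) :
    BddAbove (Set.range fun p : {p : ℝ × ℝ // 0 ≤ p.1 ∧ p.1 < p.2 ∧ p.2 ≤ 1} =>
      |(#{n ∈ Icc 1 N | x n ∈ Set.Ico p.1.1 p.1.2} : ℝ) / N - (p.1.2 - p.1.1)|) := by
  refine ⟨2, Set.forall_mem_range.2 fun ⟨⟨u, v⟩, hu, huv, hv⟩ => ?_⟩
  have hle : (#{n ∈ Icc 1 N | x n ∈ Set.Ico u v} : ℝ) / N ≤ 1 :=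
    div_le_one_of_le₀ (by exact_mod_cast (card_filter_le _ _).trans (by simp)) N.cast_nonneg
  have hge : 0 ≤ (#{n ∈ Icc 1 N | x n ∈ Set.Ico u v} : ℝ) / N := by positivity
  rw [abs_le]
  constructor <;> dsimp only <;> linarith

lemma disc_nonneg (N : ℕ) : 0 ≤ disc N x :=
  (abs_nonneg _).trans (le_ciSup (bddAbove_disc x N) ⟨(0, 1), le_rfl, zero_lt_one, le_rfl⟩)

lemma abs_blockDeviation_le_mul_disc (N : ℕ) {u v : ℝ} (hu : 0 ≤ u) (huv : u ≤ v) (hv : v ≤ 1) :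
    |blockDeviation x 0 N u v| ≤ N * disc N x := by
  rcases huv.eq_or_lt with rfl | huv
  · simpa [blockDeviation] using mul_nonneg N.cast_nonneg (disc_nonneg x N)
  · rw [← mul_abs_card_div_sub]
    exact mul_le_mul_of_nonneg_left
      (le_ciSup (bddAbove_disc x N) ⟨(u, v), hu, huv, hv⟩) N.cast_nonneg

lemma mul_disc_le {N : ℕ} {R : ℝ}
    (h : ∀ u v, 0 ≤ u → u < v → v ≤ 1 → |blockDeviation x 0 N u v| ≤ R) :
    N * disc N x ≤ R := by
  rw [disc, Real.mul_iSup_of_nonneg N.cast_nonneg]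
  exact ciSup_le fun p => (mul_abs_card_div_sub x N _ _).trans_le (h _ _ p.2.1 p.2.2.1 p.2.2.2)

lemma mul_disc_le_self (N : ℕ) : N * disc N x ≤ N :=
  mul_disc_le x fun _ _ hu huv hv => abs_blockDeviation_le x 0 N hu huv.le hv

end Deviation

lemma fract_add_mem_Ico_iff (β w : ℝ) {u v : ℝ} (hu : 0 ≤ u) (hv : v ≤ 1) :
    Int.fract (β + w) ∈ Set.Ico u v ↔
      Int.fract w ∈ Set.Ico (max (u - Int.fract β) 0) (max (v - Int.fract β) 0) ∨
        Int.fract w ∈ Set.Ico (min (u + 1 - Int.fract β) 1) (min (v + 1 - Int.fract β) 1) := by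
  set b := Int.fract β
  set t := Int.fract w
  have hb := Int.fract_nonneg β
  have hb' := Int.fract_lt_one β
  have ht := Int.fract_nonneg w
  have ht' := Int.fract_lt_one w
  have hsum : β + w = b + t + ((⌊β⌋ + ⌊w⌋ : ℤ) : ℝ) := by
    simp only [b, t, Int.fract]
    push_cast
    ring
  rw [hsum, Int.fract_add_intCast]
  simp only [Set.mem_Ico, max_le_iff, lt_max_iff, min_le_iff, lt_min_iff]
  rcases lt_or_ge (b + t) 1 with h | h
  · rw [Int.fract_eq_self.2 ⟨by linarith, h⟩]
    constructor
    · rintro ⟨h1, h2⟩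
      exact Or.inl ⟨⟨by linarith, ht⟩, Or.inl (by linarith)⟩
    · rintro (⟨⟨h1, -⟩, h2 | h2⟩ | ⟨h1 | h1, h2, h3⟩) <;> constructor <;> linarith
  · have : Int.fract (b + t) = b + t - 1 := by
      rw [← Int.fract_sub_intCast (b + t) 1]
      push_cast
      exact Int.fract_eq_self.2 ⟨by linarith, by linarith⟩
    rw [this]
    constructor
    · rintro ⟨h1, h2⟩
      exact Or.inr ⟨Or.inl (by linarith), by linarith, ht'⟩
    · rintro (⟨⟨h1, -⟩, h2 | h2⟩ | ⟨h1 | h1, h2, h3⟩) <;> constructor <;> linarith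

lemma max_zero_add_min_add_one_one (a : ℝ) : max a 0 + min (a + 1) 1 = a + 1 := by
  rcases le_total a 0 with h | h
  · rw [max_eq_right h, min_eq_left (by linarith), zero_add]
  · rw [max_eq_left h, min_eq_right (by linarith)]

/-- The discrepancy of a translate mod 1 is at most twice the original one, since
`{t ∈ [0,1) : fract (b + t) ∈ [u, v)}` is the union of two disjoint intervals of total length
`v - u`. -/
lemma abs_blockDeviation_le_two_mul_disc (x : ℕ → ℝ) {s M : ℕ} {β : ℝ} (w : ℕ → ℝ)
    (hx : ∀ k, 1 ≤ k → k ≤ M → x (s + k) = Int.fract (β + w k))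
    {u v : ℝ} (hu : 0 ≤ u) (huv : u ≤ v) (hv : v ≤ 1) :
    |blockDeviation x s M u v| ≤ 2 * M * disc M (fun k => Int.fract (w k)) := by
  set t := fun k => Int.fract (w k)
  set b := Int.fract β
  set u₁ := max (u - b) 0
  set v₁ := max (v - b) 0
  set u₂ := min (u + 1 - b) 1
  set v₂ := min (v + 1 - b) 1
  have hb := Int.fract_nonneg β
  have hb' := Int.fract_lt_one β
  have hmem : ∀ k ∈ Ioc 0 M,
      x (s + k) ∈ Set.Ico u v ↔ t k ∈ Set.Ico u₁ v₁ ∨ t k ∈ Set.Ico u₂ v₂ := fun k hk => by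
    rw [mem_Ioc] at hk
    rw [hx k hk.1 hk.2]
    exact fract_add_mem_Ico_iff β (w k) hu hv
  have hdisj : Disjoint {k ∈ Ioc 0 M | t k ∈ Set.Ico u₁ v₁} {k ∈ Ioc 0 M | t k ∈ Set.Ico u₂ v₂} :=
    disjoint_filter.2 fun k _ h₁ h₂ => by
      have := Int.fract_lt_one (w k)
      simp only [Set.mem_Ico, lt_max_iff, min_le_iff, u₁, v₁, u₂] at h₁ h₂
      rcases h₁.2 with h | h <;> rcases h₂.1 with h' | h' <;> simp only [t] at * <;> linarith
  have hlen : (v₁ - u₁) + (v₂ - u₂) = v - u := by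
    have h₁ := max_zero_add_min_add_one_one (v - b)
    have h₂ := max_zero_add_min_add_one_one (u - b)
    simp only [u₁, v₁, u₂, v₂, sub_add_eq_add_sub] at *
    linarith
  have hsplit : blockDeviation x s M u v =
      blockDeviation t 0 M u₁ v₁ + blockDeviation t 0 M u₂ v₂ := by
    rw [blockDeviation_eq_shift, blockDeviation, blockDeviation, blockDeviation, zero_add,
      filter_congr hmem, filter_or, card_union_of_disjoint hdisj, ← hlen]
    push_cast
    ring
  have h₁ := abs_blockDeviation_le_mul_disc t M (u := u₁) (v := v₁) (le_max_right _ _)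
    (max_le_max (by linarith) le_rfl) (max_le (by linarith) zero_le_one)
  have h₂ := abs_blockDeviation_le_mul_disc t M (u := u₂) (v := v₂)
    (le_min (by linarith) zero_le_one) (min_le_min (by linarith) le_rfl) (min_le_right _ _)
  calc |blockDeviation x s M u v|
      ≤ |blockDeviation t 0 M u₁ v₁| + |blockDeviation t 0 M u₂ v₂| := hsplit ▸ abs_add_le _ _
    _ ≤ 2 * M * disc M t := by linarith

lemma Fidx_succ (m e : ℕ → ℕ) (l : ℕ) : Fidx m e (l + 1) = Eidx m e l + m (l + 1) := by
  simp only [Fidx, Eidx, sum_Icc_succ_top (Nat.le_add_left 1 l), add_tsub_cancel_right]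
  ring

lemma Eidx_succ (m e : ℕ → ℕ) (l : ℕ) : Eidx m e (l + 1) = Fidx m e (l + 1) + e (l + 1) := by
  simp only [Fidx, Eidx, sum_Icc_succ_top (Nat.le_add_left 1 l), add_tsub_cancel_right]
  ring

lemma le_sum_Icc_of_pos {m : ℕ → ℕ} (hm : ∀ j, 1 ≤ j → 0 < m j) (l : ℕ) :
    l ≤ ∑ i ∈ Icc 1 l, m i := by
  simpa using card_nsmul_le_sum (Icc 1 l) m 1 fun i hi => hm i (mem_Icc.1 hi).1

lemma le_Fidx {m : ℕ → ℕ} (e : ℕ → ℕ) (hm : ∀ j, 1 ≤ j → 0 < m j) (l : ℕ) : l ≤ Fidx m e l :=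
  (le_sum_Icc_of_pos hm l).trans (Nat.le_add_right _ _)

lemma le_Eidx {m : ℕ → ℕ} (e : ℕ → ℕ) (hm : ∀ j, 1 ≤ j → 0 < m j) (l : ℕ) : l ≤ Eidx m e l :=
  (le_sum_Icc_of_pos hm l).trans (Nat.le_add_right _ _)

lemma mul_disc_le_of_isBlockSeq {m e a : ℕ → ℕ} (ha : IsBlockSeq m e a) (α : ℝ) {l N : ℕ}
    (hFN : Fidx m e (l + 1) < N) (hNE : N ≤ Eidx m e (l + 1)) :
    N * disc N (fun n => Int.fract (a n * α)) ≤
      Eidx m e l + 2 * m (l + 1) * disc (m (l + 1)) (fun n => Int.fract (n * α)) +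
        2 * (N - Fidx m e (l + 1) : ℕ) *
          disc (N - Fidx m e (l + 1)) (fun n => Int.fract ((n : ℝ) ^ 2 * α)) := by
  obtain ⟨hlin, hquad⟩ := ha (l + 1) l.succ_pos
  simp only [add_tsub_cancel_right] at hlin hquad
  set x := fun n => Int.fract (a n * α)
  set K := N - Fidx m e (l + 1)
  have hF := Fidx_succ m e l
  have hN : N = 0 + Eidx m e l + m (l + 1) + K := by omega
  apply mul_disc_le
  intro u v hu huv hv
  rw [hN, blockDeviation_add, blockDeviation_add]
  simp only [zero_add, ← hF]
  have hE := abs_blockDeviation_le x 0 (Eidx m e l) hu huv.le hv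
  have hlinear := abs_blockDeviation_le_two_mul_disc x (s := Eidx m e l) (M := m (l + 1))
    (β := Bval m e l * α) (fun n => n * α)
    (fun k hk₁ hk₂ => by
      simp only [x]
      rw [hlin _ (by omega) (by omega), add_tsub_cancel_left]
      push_cast
      ring_nf) hu huv.le hv
  have hquadratic := abs_blockDeviation_le_two_mul_disc x (s := Fidx m e (l + 1)) (M := K)
    (β := Aval m e (l + 1) * α) (fun n => (n : ℝ) ^ 2 * α)
    (fun k hk₁ hk₂ => by
      simp only [x]
      rw [hquad _ (by omega) (by omega), add_tsub_cancel_left]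
      push_cast
      ring_nf) hu huv.le hv
  exact (abs_add_le _ _).trans
    (add_le_add ((abs_add_le _ _).trans (add_le_add hE hlinear)) hquadratic)

lemma eventually_mul_log_sq_le_rpow (c : ℝ) {γ : ℝ} (hγ : 0 < γ) :
    ∀ᶠ x : ℝ in atTop, c * log x ^ 2 ≤ x ^ γ := by
  filter_upwards [((isLittleO_log_rpow_rpow_atTop 2 hγ).const_mul_left c).bound one_pos,
    eventually_ge_atTop 0] with x hx hx0
  rw [one_mul, Real.norm_of_nonneg (rpow_nonneg hx0 γ), rpow_two] at hx
  exact (le_abs_self _).trans hx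

lemma add_two_mul_disc_le_mul_log_sq {E M N : ℕ} {c : ℝ} {z : ℕ → ℝ} (hE : 1 ≤ E)
    (hEM : (E : ℝ) ≤ log M ^ 2) (hMN : M ≤ N)
    (hz : 2 ≤ M → M * disc M z ≤ c * log M ^ (3 / 2 : ℝ)) :
    E + 2 * M * disc M z ≤ (1 + 2 * max c 0) * log N ^ 2 := by
  have hE' : (1 : ℝ) ≤ E := by exact_mod_cast hE
  have hlogM : 1 ≤ log M := by nlinarith [log_natCast_nonneg M]
  have hM : 2 ≤ M := by
    by_contra! h
    interval_cases M <;> norm_num at hlogM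
  have hlogMN : log M ≤ log N :=
    log_le_log (by positivity) (by exact_mod_cast hMN)
  have hpow : log M ^ (3 / 2 : ℝ) ≤ log M ^ 2 := by
    rw [← rpow_two]
    exact rpow_le_rpow_of_exponent_le hlogM (by norm_num)
  have hdisc : M * disc M z ≤ max c 0 * log M ^ 2 :=
    calc M * disc M z ≤ c * log M ^ (3 / 2 : ℝ) := hz hM
      _ ≤ max c 0 * log M ^ (3 / 2 : ℝ) :=
        mul_le_mul_of_nonneg_right (le_max_left c 0) (by positivity)
      _ ≤ max c 0 * log M ^ 2 := mul_le_mul_of_nonneg_left hpow (le_max_right c 0)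
  have hsq : log M ^ 2 ≤ log N ^ 2 := pow_le_pow_left₀ (by linarith) hlogMN 2
  nlinarith [le_max_right c 0]

/-- Raising to the eighth power turns the claim into `2⁸ K⁴ (log K)³ ≤ X⁴`, which follows from
`K ≤ 2X / log X` and `log K ≤ 2 log X`. -/
lemma two_mul_rpow_mul_log_rpow_le {X K : ℝ} (hX0 : 0 < X) (hX : 2 ^ 15 ≤ log X) (hK1 : 1 ≤ K)
    (hK : K ≤ ⌈X / log X⌉₊) :
    2 * (K ^ (1 / 2 : ℝ) * log K ^ (3 / 8 : ℝ)) ≤ X ^ (1 / 2 : ℝ) := by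
  set L := log X
  have hL : 0 < L := by linarith
  have hXL : 0 < X / L := div_pos hX0 hL
  have hLX : L + 1 ≤ X := by
    simpa only [L, exp_log hX0] using add_one_le_exp L
  have hKL : K * L ≤ 2 * X := by
    have : K ≤ X / L + 1 := hK.trans (Nat.ceil_lt_add_one hXL.le).le
    rw [div_add_one hL.ne', le_div_iff₀ hL] at this
    linarith
  have hlogK0 : 0 ≤ log K := log_nonneg hK1
  have hlogK : log K ≤ 2 * L := by
    have h2 : log 2 < 1 := by linarith [log_two_lt_d9]
    have : log K ≤ log (2 * X) := log_le_log (by linarith) (by nlinarith)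
    rw [log_mul two_ne_zero hX0.ne'] at this
    linarith
  have rpow_pow_eight : ∀ y : ℝ, 0 ≤ y → ∀ r : ℝ, (y ^ r) ^ 8 = y ^ (r * 8) := fun y hy r => by
    rw [← rpow_mul_natCast hy]; norm_num
  rw [← pow_le_pow_iff_left₀ (by positivity) (by positivity) (by norm_num : 8 ≠ 0), mul_pow,
    mul_pow, rpow_pow_eight K (by linarith), rpow_pow_eight _ hlogK0, rpow_pow_eight X hX0.le]
  norm_num
  calc 256 * (K ^ 4 * log K ^ 3) ≤ 256 * (K ^ 4 * (2 * L) ^ 3) := by gcongr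
    _ = 2 ^ 11 * (K * L) ^ 4 / L := by field_simp; ring
    _ ≤ 2 ^ 11 * (2 * X) ^ 4 / L := by gcongr
    _ = 2 ^ 15 * X ^ 4 / L := by ring
    _ ≤ X ^ 4 := by rw [div_le_iff₀ hL, mul_comm (X ^ 4)]; gcongr

lemma two_mul_disc_le_max_one_mul_rpow_half {z : ℕ → ℝ} {c X : ℝ} {K : ℕ}
    (hz : 2 ≤ K → K * disc K z ≤ c * (K : ℝ) ^ (1 / 2 : ℝ) * log K ^ (3 / 8 : ℝ))
    (hX0 : 0 < X) (hX : 2 ^ 15 ≤ log X) (hK1 : 1 ≤ K) (hK : K ≤ ⌈X / log X⌉₊) :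
    2 * K * disc K z ≤ max 1 c * X ^ (1 / 2 : ℝ) := by
  have hC : 1 ≤ max 1 c := le_max_left 1 c
  rcases hK1.eq_or_lt with rfl | hK2
  · have hX2 : 2 ≤ X ^ (1 / 2 : ℝ) := by
      have := add_one_le_exp (log X)
      rw [exp_log hX0] at this
      rw [← sqrt_eq_rpow, le_sqrt zero_le_two] <;> linarith
    have h1 := mul_disc_le_self z 1
    push_cast at h1 ⊢
    calc 2 * 1 * disc 1 z ≤ 2 := by linarith
      _ ≤ max 1 c * X ^ (1 / 2 : ℝ) := by nlinarith
  · have hmain := two_mul_rpow_mul_log_rpow_le (K := K) hX0 hX (by exact_mod_cast hK1)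
      (by exact_mod_cast hK)
    calc 2 * K * disc K z ≤ 2 * (c * (K ^ (1 / 2 : ℝ) * log K ^ (3 / 8 : ℝ))) := by
          rw [← mul_assoc c]; linarith [hz hK2]
      _ ≤ 2 * (max 1 c * (K ^ (1 / 2 : ℝ) * log K ^ (3 / 8 : ℝ))) := by
          gcongr
          exact le_max_right 1 c
      _ ≤ max 1 c * X ^ (1 / 2 : ℝ) := by nlinarith

theorem statement9_general (γ : ℝ) (hγ0 : 0 < γ)
    (m e : ℕ → ℕ)
    (hm1 : ∀ j, 1 ≤ j → 0 < m j)
    (a : ℕ → ℕ) (ha : IsBlockSeq m e a)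
    (hcondi : ∀ l, 2 ≤ l → (Eidx m e (l - 1) : ℝ) ≤ (Real.log (m l)) ^ 2)
    (hcondii : ∀ l, 1 ≤ l →
      e l = ⌈(Fidx m e l : ℝ) ^ (2 * γ) / Real.log ((Fidx m e l : ℝ) ^ (2 * γ))⌉₊)
    (α : ℝ) (c₁ c₂ : ℝ)
    (hα1 : ∀ N : ℕ, 2 ≤ N →
      (N : ℝ) * disc N (fun n => Int.fract ((n : ℝ) * α)) ≤ c₁ * (Real.log N) ^ (3 / 2 : ℝ))
    (hα2 : ∀ N : ℕ, 2 ≤ N →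
      (N : ℝ) * disc N (fun n => Int.fract ((n : ℝ) ^ 2 * α)) ≤
        c₂ * (N : ℝ) ^ (1 / 2 : ℝ) * (Real.log N) ^ (3 / 8 : ℝ)) :
    ∀ᶠ l : ℕ in atTop, ∀ N : ℕ, Fidx m e l < N → N ≤ Eidx m e l →
      (N : ℝ) * disc N (fun n => Int.fract ((a n : ℝ) * α)) ≤
        max 1 c₂ * 2 ^ (1 + γ) * (N : ℝ) ^ γ := by
  have hlog : Tendsto (fun n : ℕ => log ((n : ℝ) ^ (2 * γ))) atTop atTop :=
    tendsto_log_atTop.comp ((tendsto_rpow_atTop (by positivity)).comp tendsto_natCast_atTop_atTop)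
  obtain ⟨L, hL⟩ := eventually_atTop.1 <|
    (tendsto_natCast_atTop_atTop.eventually
      (eventually_mul_log_sq_le_rpow (1 + 2 * max c₁ 0) hγ0)).and
    (hlog.eventually_ge_atTop (2 ^ 15))
  filter_upwards [eventually_ge_atTop (L + 2)] with l hl N hFN hNE
  obtain ⟨k, rfl⟩ : ∃ k, l = k + 1 := ⟨l - 1, by omega⟩
  have hkF := le_Fidx e hm1 (k + 1)
  have hFpos : (0 : ℝ) < Fidx m e (k + 1) := by
    exact_mod_cast (show 0 < Fidx m e (k + 1) by omega)
  have hcond := hcondi (k + 1) (by omega)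
  rw [add_tsub_cancel_right] at hcond
  have hlin := add_two_mul_disc_le_mul_log_sq (by have := le_Eidx e hm1 k; omega) hcond
    (show m (k + 1) ≤ N by have := Fidx_succ m e k; omega) (hα1 _)
  have hquad := two_mul_disc_le_max_one_mul_rpow_half (hα2 _) (rpow_pos_of_pos hFpos _)
    (hL _ (by omega)).2 (show 1 ≤ N - Fidx m e (k + 1) by omega)
    (by rw [← hcondii (k + 1) (by omega)]; have := Eidx_succ m e k; omega)
  rw [← rpow_mul hFpos.le, show 2 * γ * (1 / 2) = γ by ring] at hquad
  have hFN' : (Fidx m e (k + 1) : ℝ) ^ γ ≤ (N : ℝ) ^ γ :=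
    rpow_le_rpow hFpos.le (by exact_mod_cast hFN.le) hγ0.le
  have hNγ : 0 ≤ max 1 c₂ * (N : ℝ) ^ γ := by positivity
  have h2 : (2 : ℝ) ≤ 2 ^ (1 + γ) := by
    simpa using rpow_le_rpow_of_exponent_le one_le_two (by linarith : (1 : ℝ) ≤ 1 + γ)
  calc (N : ℝ) * disc N (fun n => Int.fract ((a n : ℝ) * α))
      ≤ (1 + 2 * max c₁ 0) * log N ^ 2 + max 1 c₂ * (Fidx m e (k + 1) : ℝ) ^ γ :=
        (mul_disc_le_of_isBlockSeq ha α hFN hNE).trans (by linarith)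
    _ ≤ max 1 c₂ * N ^ γ + max 1 c₂ * N ^ γ := by
        refine add_le_add ((hL N (by omega)).1.trans ?_) (by gcongr)
        exact le_mul_of_one_le_left (by positivity) (le_max_left 1 c₂)
    _ ≤ max 1 c₂ * 2 ^ (1 + γ) * N ^ γ := by
        nlinarith [mul_le_mul_of_nonneg_right h2 hNγ]

theorem statement9 (γ : ℝ) (hγ0 : 0 < γ) (hγ : γ ≤ 1 / 2)
    (m e : ℕ → ℕ) (hm : StrictMonoOn m (Set.Ici 1)) (he : StrictMonoOn e (Set.Ici 1))
    (hm1 : ∀ j, 1 ≤ j → 0 < m j) (he1 : ∀ j, 1 ≤ j → 0 < e j)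
    (a : ℕ → ℕ) (ha : IsBlockSeq m e a)
    (hcondi : ∀ l, 2 ≤ l → (Eidx m e (l - 1) : ℝ) ≤ (Real.log (m l)) ^ 2)
    (hcondii : ∀ l, 1 ≤ l →
      e l = ⌈(Fidx m e l : ℝ) ^ (2 * γ) / Real.log ((Fidx m e l : ℝ) ^ (2 * γ))⌉₊)
    (α : ℝ) (c₁ c₂ : ℝ)
    (hα1 : ∀ N : ℕ, 2 ≤ N →
      (N : ℝ) * disc N (fun n => Int.fract ((n : ℝ) * α)) ≤ c₁ * (Real.log N) ^ (3 / 2 : ℝ))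
    (hα2 : ∀ N : ℕ, 2 ≤ N →
      (N : ℝ) * disc N (fun n => Int.fract ((n : ℝ) ^ 2 * α)) ≤
        c₂ * (N : ℝ) ^ (1 / 2 : ℝ) * (Real.log N) ^ (3 / 8 : ℝ)) :
    ∀ᶠ l : ℕ in atTop, ∀ N : ℕ, Fidx m e l < N → N ≤ Eidx m e l →
      (N : ℝ) * disc N (fun n => Int.fract ((a n : ℝ) * α)) ≤
        max 1 c₂ * 2 ^ (1 + γ) * (N : ℝ) ^ γ :=
  statement9_general γ hγ0 m e hm1 a ha hcondi hcondii α c₁ c₂ hα1 hα2
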